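/- If the source condition ∑_i x_i²/λ_i^{2μ} ≤ C² holds for some 0 < μ ≤ 1/2 and C > 0, then B(α)² := ∑_i α/(λ_i+α) · x_i² ≤ C² α^{2μ} for all α > 0. -/

import Mathlib

/-!
With `t = α / λ`, the filter factor is `α / (λ + α) = t / (1 + t) ≤ min t 1 ≤ t ^ (2μ)` because
`0 ≤ 2μ ≤ 1`. Hence each term of `B(α)²` is at most `α ^ (2μ)` times the corresponding term of the
source sum, and summing gives the bound.
-/

namespace Real

theorem div_one_add_le_rpow {t s : ℝ} (ht : 0 ≤ t) (hs₀ : 0 ≤ s) (hs₁ : s ≤ 1) :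
    t / (1 + t) ≤ t ^ s := by
  rcases le_total t 1 with h | h
  · calc t / (1 + t) ≤ t := div_le_self ht (by linarith)
      _ ≤ t ^ s := self_le_rpow_of_le_one ht h hs₁
  · calc t / (1 + t) ≤ 1 := (div_le_one (by positivity)).2 (by linarith)
      _ ≤ t ^ s := one_le_rpow h hs₀

theorem div_add_le_rpow_div_rpow {l a s : ℝ} (hl : 0 < l) (ha : 0 ≤ a) (hs₀ : 0 ≤ s)
    (hs₁ : s ≤ 1) : a / (l + a) ≤ a ^ s / l ^ s :=
  calc a / (l + a) = a / l / (1 + a / l) := by field_simp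
    _ ≤ (a / l) ^ s := div_one_add_le_rpow (div_nonneg ha hl.le) hs₀ hs₁
    _ = a ^ s / l ^ s := div_rpow ha hl.le s

end Real

theorem stmt_6_general (lam x : ℕ → ℝ) (μ C : ℝ) (hlam : ∀ i, 0 < lam i)
    (hμ : 0 < μ) (hμ' : μ ≤ 1 / 2)
    (hsum : Summable fun i => (x i) ^ 2 / (lam i) ^ (2 * μ))
    (hsource : (∑' i, (x i) ^ 2 / (lam i) ^ (2 * μ)) ≤ C ^ 2) :
    ∀ α : ℝ, 0 < α → (∑' i, α / (lam i + α) * (x i) ^ 2) ≤ C ^ 2 * α ^ (2 * μ) := by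
  intro α hα
  have hterm : ∀ i, α / (lam i + α) * x i ^ 2 ≤ α ^ (2 * μ) * (x i ^ 2 / lam i ^ (2 * μ)) :=
    fun i => calc
      α / (lam i + α) * x i ^ 2 ≤ α ^ (2 * μ) / lam i ^ (2 * μ) * x i ^ 2 :=
        mul_le_mul_of_nonneg_right
          (Real.div_add_le_rpow_div_rpow (hlam i) hα.le (by linarith) (by linarith))
          (sq_nonneg _)
      _ = α ^ (2 * μ) * (x i ^ 2 / lam i ^ (2 * μ)) := by ring
  have hmajorant := hsum.mul_left (α ^ (2 * μ))
  have hnonneg : ∀ i, 0 ≤ α / (lam i + α) * x i ^ 2 := fun i => by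
    have := hlam i
    positivity
  calc (∑' i, α / (lam i + α) * x i ^ 2)
      ≤ ∑' i, α ^ (2 * μ) * (x i ^ 2 / lam i ^ (2 * μ)) :=
        (hmajorant.of_nonneg_of_le hnonneg hterm).tsum_le_tsum hterm hmajorant
    _ = α ^ (2 * μ) * ∑' i, x i ^ 2 / lam i ^ (2 * μ) := tsum_mul_left
    _ ≤ α ^ (2 * μ) * C ^ 2 := by gcongr
    _ = C ^ 2 * α ^ (2 * μ) := mul_comm _ _

/-- If the source condition `∑_i x_i²/λ_i^{2μ} ≤ C²` holds with `0 < μ ≤ 1/2`, `C > 0`, then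
`B(α)² = ∑_i α/(λ_i+α) x_i² ≤ C² α^{2μ}` for all `α > 0`. -/
theorem stmt_6 (lam x : ℕ → ℝ) (μ C : ℝ) (hlam : ∀ i, 0 < lam i)
    (hμ : 0 < μ) (hμ' : μ ≤ 1 / 2) (hC : 0 < C)
    (hsum : Summable fun i => (x i) ^ 2 / (lam i) ^ (2 * μ))
    (hsource : (∑' i, (x i) ^ 2 / (lam i) ^ (2 * μ)) ≤ C ^ 2) :
    ∀ α : ℝ, 0 < α → (∑' i, α / (lam i + α) * (x i) ^ 2) ≤ C ^ 2 * α ^ (2 * μ) :=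
  stmt_6_general lam x μ C hlam hμ hμ' hsum hsource
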